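/- arXiv:1310.2990 — 2 statements merged into one kernel-verified Lean document; each statement's English description precedes it below -/
import Mathlib

section
/- Let K be a Galois extension of ℚ of degree 3. Then the trace form q(x) = Tr_{K/ℚ}(x²) on K, viewed as a quadratic form over ℚ, is isometric to the diagonal form ⟨1,1,1⟩. -/
/-!
Let `σ` generate `Gal(K/ℚ)`. If `u ∈ K` satisfies `Tr(u²) = 1` and `Tr(σu · u) = 0`, then
`u, σu, σ²u` is an orthonormal basis of the trace form. For `u = 1/3 + w` with `Tr w = 0` both
conditions reduce to `Tr(w²) = 2/3`, since `2 Tr(σw · w) = -Tr(w²)` for every trace-zero `w`.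

Fix a nonzero trace-zero `x` and put `s = Tr(x²)`, `N = N(x)`. On the trace-zero plane the trace
form is `(α, β) ↦ (α² - αβ + β²) s` in the coordinates `αx + βσx`. The square root
`δ = (x - σx)(σx - σ²x)(σ²x - x)` of the discriminant of the minimal polynomial of `x` is fixed by
`σ`, hence rational, and `2δ² = s³ - 54N²`. So `s = 2(a² + 3b²)` with `a = δ/s`, `b = 3N/s`,
which is exactly what is needed for the plane to represent `2/3`.
-/

open Module QuadraticMap

theorem LinearMap.BilinForm.toQuadraticMap_equivalent_weightedSumSquares_one
    {F V ι : Type*} [Field F] [AddCommGroup V] [Module F V] [FiniteDimensional F V] [Fintype ι]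
    (B : LinearMap.BilinForm F V) (v : ι → V) (hv₁ : ∀ i, B (v i) (v i) = 1)
    (hv₀ : ∀ i j, i ≠ j → B (v i) (v j) = 0) (hι : Fintype.card ι = finrank F V) :
    B.toQuadraticMap.Equivalent (weightedSumSquares F fun _ : ι => (1 : F)) := by
  classical
  have hv : ∀ i j, B (v i) (v j) = if i = j then 1 else 0 := by
    intro i j
    split_ifs with h
    exacts [h ▸ hv₁ i, hv₀ i j h]
  let b := basisOfLinearIndependentOfCardEqFinrank' v
    (B.linearIndependent_of_iIsOrtho hv₀ (by simp [hv₁])) hι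
  refine .symm ⟨⟨b.equivFun.symm, fun c => ?_⟩⟩
  simp [b, Basis.equivFun_symm_apply, hv, weightedSumSquares_apply]

theorem bijective_pow_of_nat_card_eq_prime {G : Type*} [Group G] {p : ℕ} [Fact p.Prime]
    (hG : Nat.card G = p) {g : G} (hg : g ≠ 1) :
    Function.Bijective fun i : Fin p => g ^ (i : ℕ) := by
  have : Finite G := Nat.finite_of_card_ne_zero (hG ▸ NeZero.ne p)
  have hord : orderOf g = p := orderOf_eq_prime (hG ▸ pow_card_eq_one') hg
  refine Function.Injective.bijective_of_nat_card_le (fun i j hij => Fin.ext ?_) (by simp [hG])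
  exact pow_injOn_Iio_orderOf (by simp [hord]) (by simp [hord]) hij

theorem Algebra.exists_ne_zero_trace_eq_zero {F L : Type*} [Field F] [CommRing L] [Algebra F L]
    [FiniteDimensional F L] (h : 1 < finrank F L) :
    ∃ x : L, x ≠ 0 ∧ Algebra.trace F L x = 0 := by
  obtain ⟨x, hx, hx0⟩ := (Submodule.ne_bot_iff _).mp
    (LinearMap.ker_ne_bot_of_finrank_lt (f := Algebra.trace F L) (by rwa [finrank_self]))
  exact ⟨x, hx0, hx⟩

theorem Algebra.traceForm_algEquiv_apply_algEquiv_apply {F L : Type*} [CommRing F] [CommRing L]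
    [Algebra F L] (τ ρ : Gal(L/F)) (a b : L) :
    Algebra.traceForm F L (τ a) (ρ b) = Algebra.trace F L ((ρ⁻¹ * τ) a * b) := by
  rw [Algebra.traceForm_apply, ← Algebra.trace_eq_of_algEquiv ρ ((ρ⁻¹ * τ) a * b), map_mul ρ,
    AlgEquiv.mul_apply, AlgEquiv.aut_inv, AlgEquiv.apply_symm_apply]

theorem Algebra.trace_algEquiv_apply_algebraMap_add_mul_self {F L : Type*} [Field F]
    [CommRing L] [Algebra F L] (τ : L ≃ₐ[F] L) (r : F) {w : L} (hw : Algebra.trace F L w = 0) :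
    Algebra.trace F L (τ (algebraMap F L r + w) * (algebraMap F L r + w)) =
      finrank F L * r ^ 2 + Algebra.trace F L (τ w * w) := by
  have hexp : τ (algebraMap F L r + w) * (algebraMap F L r + w) =
      algebraMap F L (r ^ 2) + r • (τ w + w) + τ w * w := by
    simp only [map_add, AlgEquiv.commutes, Algebra.smul_def, map_pow]
    ring
  rw [hexp, map_add, map_add, Algebra.trace_algebraMap, map_smul, map_add,
    Algebra.trace_eq_of_algEquiv, hw, add_zero, smul_zero, add_zero, nsmul_eq_mul]

theorem exists_sq_sub_mul_add_sq_mul_eq_two_thirds {F : Type*} [Field F] [LinearOrder F]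
    [IsStrictOrderedRing F] {s δ N : F} (hN : N ≠ 0) (h : s ^ 3 = 2 * δ ^ 2 + 54 * N ^ 2) :
    ∃ α β : F, (α ^ 2 - α * β + β ^ 2) * s = 2 / 3 := by
  have hs : s ≠ 0 := by
    rintro rfl
    have : 0 < 2 * δ ^ 2 + 54 * N ^ 2 := by positivity
    linarith
  -- `α - β/2 = 6N/s²` and `β/2 = 2δ/(3s²)`, using `α² - αβ + β² = (α - β/2)² + 3(β/2)²`.
  refine ⟨(18 * N + 2 * δ) / (3 * s ^ 2), 4 * δ / (3 * s ^ 2), ?_⟩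
  field_simp
  linear_combination (-6 : F) * h

namespace GaloisCubic

variable {F L : Type*} [Field F] [Field L] [Algebra F L] [FiniteDimensional F L] [IsGalois F L]

theorem apply_apply_apply (h3 : finrank F L = 3) (σ : Gal(L/F)) (w : L) : σ (σ (σ w)) = w := by
  have : σ ^ 3 = 1 := by rw [← h3, ← IsGalois.card_aut_eq_finrank]; exact pow_card_eq_one'
  simpa [pow_succ] using DFunLike.congr_fun this w

theorem exists_ne_one (h3 : finrank F L = 3) : ∃ σ : Gal(L/F), σ ≠ 1 :=
  have : Nontrivial Gal(L/F) := Finite.one_lt_card_iff_nontrivial.mp <| by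
    rw [IsGalois.card_aut_eq_finrank, h3]; norm_num
  exists_ne 1

theorem bijective_pow (h3 : finrank F L = 3) {σ : Gal(L/F)} (hσ : σ ≠ 1) :
    Function.Bijective fun i : Fin 3 => σ ^ (i : ℕ) :=
  have : Fact (Nat.Prime 3) := ⟨Nat.prime_three⟩
  bijective_pow_of_nat_card_eq_prime (by rw [IsGalois.card_aut_eq_finrank, h3]) hσ

theorem algebraMap_trace_eq (h3 : finrank F L = 3) {σ : Gal(L/F)} (hσ : σ ≠ 1) (w : L) :
    algebraMap F L (Algebra.trace F L w) = w + σ w + σ (σ w) := by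
  rw [trace_eq_sum_automorphisms, ← Fintype.sum_bijective _ (bijective_pow h3 hσ)
    (fun i : Fin 3 => (σ ^ (i : ℕ)) w) _ fun _ => rfl, Fin.sum_univ_three]
  simp [pow_two]

theorem algebraMap_norm_eq (h3 : finrank F L = 3) {σ : Gal(L/F)} (hσ : σ ≠ 1) (w : L) :
    algebraMap F L (Algebra.norm F w) = w * σ w * σ (σ w) := by
  rw [Algebra.norm_eq_prod_automorphisms, ← Fintype.prod_bijective _ (bijective_pow h3 hσ)
    (fun i : Fin 3 => (σ ^ (i : ℕ)) w) _ fun _ => rfl, Fin.prod_univ_three]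
  simp [pow_two]

theorem exists_algebraMap_eq_of_apply_eq (h3 : finrank F L = 3) {σ : Gal(L/F)} (hσ : σ ≠ 1)
    {w : L} (hw : σ w = w) : ∃ r : F, algebraMap F L r = w := by
  rw [← Set.mem_range, ← IntermediateField.mem_bot, IsGalois.mem_bot_iff_fixed]
  intro τ
  obtain ⟨i, rfl⟩ := (bijective_pow h3 hσ).2 τ
  simpa [AlgEquiv.coe_pow] using Function.iterate_fixed hw i

theorem two_mul_trace_apply_mul_self (h3 : finrank F L = 3) {σ : Gal(L/F)} (hσ : σ ≠ 1)
    {w : L} (hw : Algebra.trace F L w = 0) :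
    2 * Algebra.trace F L (σ w * w) = -Algebra.trace F L (w * w) := by
  apply (algebraMap F L).injective
  have hsum := algebraMap_trace_eq h3 hσ w
  rw [hw, map_zero] at hsum
  simp only [map_mul, map_neg, map_ofNat, algebraMap_trace_eq h3 hσ, apply_apply_apply h3]
  linear_combination (-(w + σ w + σ (σ w))) * hsum

theorem exists_two_mul_sq_eq_trace_mul_self_pow_sub (h3 : finrank F L = 3) {x : L}
    (hx : Algebra.trace F L x = 0) :
    ∃ δ : F, 2 * δ ^ 2 = Algebra.trace F L (x * x) ^ 3 - 54 * Algebra.norm F x ^ 2 := by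
  obtain ⟨σ, hσ⟩ := exists_ne_one h3
  have hsum := algebraMap_trace_eq h3 hσ x
  rw [hx, map_zero] at hsum
  set d := (x - σ x) * (σ x - σ (σ x)) * (σ (σ x) - x) with hd
  obtain ⟨δ, hδ⟩ : ∃ δ : F, algebraMap F L δ = d := by
    refine exists_algebraMap_eq_of_apply_eq h3 hσ ?_
    simp only [hd, map_mul, map_sub, apply_apply_apply h3]
    ring
  refine ⟨δ, (algebraMap F L).injective ?_⟩
  simp only [map_mul, map_sub, map_pow, map_ofNat, hδ, hd, algebraMap_trace_eq h3 hσ,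
    algebraMap_norm_eq h3 hσ]
  have hc : σ (σ x) = -x - σ x := by linear_combination -hsum
  generalize σ (σ x) = z at hc ⊢
  generalize σ x = y at hc ⊢
  subst hc
  ring

theorem trace_smul_add_smul_mul_self (h3 : finrank F L = 3) {σ : Gal(L/F)} (hσ : σ ≠ 1)
    {x : L} (hx : Algebra.trace F L x = 0) (α β : F) :
    Algebra.trace F L ((α • x + β • σ x) * (α • x + β • σ x)) =
      (α ^ 2 - α * β + β ^ 2) * Algebra.trace F L (x * x) := by
  have hσx : Algebra.trace F L (σ x * σ x) = Algebra.trace F L (x * x) := by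
    rw [← map_mul, Algebra.trace_eq_of_algEquiv]
  have hexp : (α • x + β • σ x) * (α • x + β • σ x) =
      (α ^ 2) • (x * x) + (2 * α * β) • (σ x * x) + (β ^ 2) • (σ x * σ x) := by
    simp only [Algebra.smul_def, map_mul, map_pow, map_ofNat]
    ring
  rw [hexp, map_add, map_add, map_smul, map_smul, map_smul, hσx, smul_eq_mul, smul_eq_mul,
    smul_eq_mul]
  linear_combination α * β * two_mul_trace_apply_mul_self h3 hσ hx

theorem exists_trace_eq_zero_trace_mul_self_eq_two_thirds [LinearOrder F] [IsStrictOrderedRing F]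
    (h3 : finrank F L = 3) :
    ∃ w : L, Algebra.trace F L w = 0 ∧ Algebra.trace F L (w * w) = 2 / 3 := by
  obtain ⟨x, hx0, hx⟩ := Algebra.exists_ne_zero_trace_eq_zero (F := F) (L := L) (by omega)
  obtain ⟨σ, hσ⟩ := exists_ne_one h3
  obtain ⟨δ, hδ⟩ := exists_two_mul_sq_eq_trace_mul_self_pow_sub h3 hx
  obtain ⟨α, β, hαβ⟩ := exists_sq_sub_mul_add_sq_mul_eq_two_thirds
    (s := Algebra.trace F L (x * x)) (δ := δ) (Algebra.norm_ne_zero_iff.mpr hx0)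
    (by linear_combination -hδ)
  refine ⟨α • x + β • σ x, ?_, by rw [trace_smul_add_smul_mul_self h3 hσ hx, hαβ]⟩
  rw [map_add, map_smul, map_smul, Algebra.trace_eq_of_algEquiv, hx, smul_zero, smul_zero,
    add_zero]

end GaloisCubic

/-- The trace form `x ↦ Tr_{K/ℚ}(x²)` of a Galois cubic field `K` is isometric over `ℚ`
to the diagonal form `⟨1,1,1⟩`. -/
theorem traceForm_of_galois_cubic (K : Type*) [Field K] [NumberField K] [IsGalois ℚ K]
    (h3 : Module.finrank ℚ K = 3) :
    QuadraticMap.Equivalent (Algebra.traceForm ℚ K).toQuadraticMap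
      (QuadraticMap.weightedSumSquares ℚ (fun _ : Fin 3 => (1 : ℚ))) := by
  obtain ⟨w, hw, hw2⟩ := GaloisCubic.exists_trace_eq_zero_trace_mul_self_eq_two_thirds h3
  have hu (τ : Gal(K/ℚ)) := Algebra.trace_algEquiv_apply_algebraMap_add_mul_self τ 3⁻¹ hw
  simp only [h3] at hu
  have hcard : Fintype.card Gal(K/ℚ) = 3 := by
    rw [← Nat.card_eq_fintype_card, IsGalois.card_aut_eq_finrank, h3]
  let e : Fin 3 ≃ Gal(K/ℚ) := (Fintype.equivFinOfCardEq hcard).symm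
  refine (Algebra.traceForm ℚ K).toQuadraticMap_equivalent_weightedSumSquares_one
    (fun i => e i (algebraMap ℚ K 3⁻¹ + w)) (fun i => ?_) (fun i j hij => ?_) (by simp [h3])
  · rw [Algebra.traceForm_algEquiv_apply_algEquiv_apply, inv_mul_cancel, hu, AlgEquiv.one_apply,
      hw2]
    norm_num
  · have hτ : (e j)⁻¹ * e i ≠ 1 := by rwa [Ne, inv_mul_eq_one, e.apply_eq_iff_eq, eq_comm]
    have := GaloisCubic.two_mul_trace_apply_mul_self h3 hτ hw
    rw [Algebra.traceForm_algEquiv_apply_algEquiv_apply, hu]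
    linarith
end

section
/- Let p be a rational prime and K, L number fields of the same degree. The Euler factors at p of the Dedekind zeta functions of K and L agree (as functions of real s > 1) if and only if p has the same decomposition type in K and L. -/
/-!
Every prime `𝔓 ∣ p` has norm `p ^ f(𝔓|p)`, so with `x = p ^ (-s)` the Euler factor at `p` is
`1 / ∏ (1 - x ^ f)`, the product running over the decomposition type. As `s` ranges over
`(1, ∞)`, `x` takes infinitely many values, so equal Euler factors force equal polynomials
`∏ (1 - X ^ f)`. Such a polynomial determines the multiset of positive exponents: once the
exponents below `c` are known to agree, cancelling their factors leaves a polynomial whose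
coefficient of `X ^ c` is minus the multiplicity of `c`.
-/

open NumberField Polynomial

noncomputable def eulerPolynomial (R : Type*) [CommRing R] (m : Multiset ℕ) : R[X] :=
  (m.map fun f => 1 - X ^ f).prod

section EulerPolynomial

variable {R : Type*} [CommRing R]

lemma eulerPolynomial_add (m m' : Multiset ℕ) :
    eulerPolynomial R (m + m') = eulerPolynomial R m * eulerPolynomial R m' := by
  simp [eulerPolynomial]

lemma eulerPolynomial_cons (f : ℕ) (m : Multiset ℕ) :
    eulerPolynomial R (f ::ₘ m) = (1 - X ^ f) * eulerPolynomial R m := by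
  simp [eulerPolynomial]

lemma eval_eulerPolynomial (m : Multiset ℕ) (x : R) :
    (eulerPolynomial R m).eval x = (m.map fun f => 1 - x ^ f).prod := by
  simp [eulerPolynomial, eval_multiset_prod, Multiset.map_map]

lemma eulerPolynomial_coeff_zero {m : Multiset ℕ} (hm : ∀ f ∈ m, 0 < f) :
    (eulerPolynomial R m).coeff 0 = 1 := by
  rw [coeff_zero_eq_eval_zero, eval_eulerPolynomial]
  refine Multiset.prod_eq_one fun y hy => ?_
  obtain ⟨f, hf, rfl⟩ := Multiset.mem_map.mp hy
  simp [zero_pow (hm f hf).ne']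

lemma eulerPolynomial_ne_zero [Nontrivial R] {m : Multiset ℕ} (hm : ∀ f ∈ m, 0 < f) :
    eulerPolynomial R m ≠ 0 := fun h => by
  simpa [h] using eulerPolynomial_coeff_zero (R := R) hm

lemma eulerPolynomial_coeff_of_forall_le {m : Multiset ℕ} {c : ℕ} (hc : 0 < c)
    (hm : ∀ f ∈ m, c ≤ f) : (eulerPolynomial R m).coeff c = -(m.count c : R) := by
  induction m using Multiset.induction_on with
  | empty => simp [eulerPolynomial, coeff_one, hc.ne']
  | cons f m ih =>
    have hcf : c ≤ f := hm f (Multiset.mem_cons_self f m)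
    have hm' : ∀ g ∈ m, c ≤ g := fun g hg => hm g (Multiset.mem_cons_of_mem hg)
    rw [eulerPolynomial_cons, sub_mul, one_mul, coeff_sub, coeff_X_pow_mul', ih hm']
    rcases hcf.eq_or_lt with rfl | hlt
    · rw [if_pos le_rfl, Nat.sub_self,
        eulerPolynomial_coeff_zero fun g hg => hc.trans_le (hm' g hg), Multiset.count_cons_self]
      push_cast
      ring
    · rw [if_neg hlt.not_ge, Multiset.count_cons_of_ne hlt.ne, sub_zero]

variable [IsDomain R] [CharZero R]

lemma count_eq_of_eulerPolynomial_eq {m m' : Multiset ℕ} (hm : ∀ f ∈ m, 0 < f)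
    (hm' : ∀ f ∈ m', 0 < f) (h : eulerPolynomial R m = eulerPolynomial R m') (c : ℕ) :
    m.count c = m'.count c := by
  induction c using Nat.strong_induction_on with
  | _ c ih =>
  rcases c.eq_zero_or_pos with rfl | hc
  · rw [Multiset.count_eq_zero.mpr fun h0 => (hm 0 h0).false,
      Multiset.count_eq_zero.mpr fun h0 => (hm' 0 h0).false]
  have hlow : m.filter (· < c) = m'.filter (· < c) := Multiset.ext.mpr fun a => by
    simp only [Multiset.count_filter]
    split_ifs with ha
    exacts [ih a ha, rfl]
  have hhigh : eulerPolynomial R (m.filter fun f => ¬ f < c) =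
      eulerPolynomial R (m'.filter fun f => ¬ f < c) := by
    refine mul_left_cancel₀ (eulerPolynomial_ne_zero (R := R) (m := m.filter (· < c))
      fun f hf => hm f (Multiset.mem_of_mem_filter hf)) ?_
    rw [← eulerPolynomial_add, Multiset.filter_add_not, hlow, ← eulerPolynomial_add,
      Multiset.filter_add_not, h]
  have hge (n : Multiset ℕ) : ∀ f ∈ n.filter fun f => ¬ f < c, c ≤ f :=
    fun _ hf => le_of_not_gt (Multiset.mem_filter.mp hf).2
  have hcoeff := congrArg (coeff · c) hhigh
  simpa only [eulerPolynomial_coeff_of_forall_le hc (hge _),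
    Multiset.count_filter_of_pos (p := fun f => ¬ f < c) (lt_irrefl c), neg_inj,
    Nat.cast_inj] using hcoeff

lemma eulerPolynomial_injOn : Set.InjOn (eulerPolynomial R) {m | ∀ f ∈ m, 0 < f} :=
  fun _ hm _ hm' h => Multiset.ext.mpr (count_eq_of_eulerPolynomial_eq hm hm' h)

end EulerPolynomial

lemma Ideal.liesOver_span_natCast {S : Type*} [CommRing S] {p : ℕ} (hp : p.Prime)
    {P : Ideal S} (hP : P ≠ ⊤) (hpP : (p : S) ∈ P) : P.LiesOver (Ideal.span {(p : ℤ)}) :=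
  (Ideal.liesOver_span_iff hP (Nat.prime_iff_prime_int.mp hp)).mpr (by simpa using hpP)

section NumberField

variable {K : Type*} [Field K] [NumberField K] {p : ℕ}

lemma inertiaDeg'_pos_of_mem (hp : p.Prime) {P : Ideal (𝓞 K)} (hP : P.IsMaximal)
    (hpP : (p : 𝓞 K) ∈ P) : 0 < Ideal.inertiaDeg' (Ideal.span {(p : ℤ)}) P :=
  have := Ideal.liesOver_span_natCast hp hP.ne_top hpP
  Ideal.inertiaDeg'_pos' _ P

lemma absNorm_eq_pow_inertiaDeg'_of_mem (hp : p.Prime) {P : Ideal (𝓞 K)} (hP : P.IsMaximal)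
    (hpP : (p : 𝓞 K) ∈ P) :
    Ideal.absNorm P = p ^ Ideal.inertiaDeg' (Ideal.span {(p : ℤ)}) P :=
  have := Ideal.liesOver_span_natCast hp hP.ne_top hpP
  Ideal.absNorm_eq_pow_inertiaDeg' P hp

lemma prod_eulerFactor_eq_inv_eval_eulerPolynomial (hp : p.Prime)
    (hK : {P : Ideal (𝓞 K) | P.IsMaximal ∧ (p : 𝓞 K) ∈ P}.Finite) (s : ℝ) :
    ∏ P ∈ hK.toFinset, (1 - (Ideal.absNorm P : ℝ) ^ (-s))⁻¹
      = ((eulerPolynomial ℝ (hK.toFinset.val.map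
          fun P => Ideal.inertiaDeg' (Ideal.span {(p : ℤ)}) P)).eval ((p : ℝ) ^ (-s)))⁻¹ := by
  rw [eval_eulerPolynomial, Multiset.map_map, ← Multiset.prod_map_inv,
    Finset.prod_eq_multiset_prod]
  refine congrArg Multiset.prod (Multiset.map_congr rfl fun P hP => ?_)
  obtain ⟨hPmax, hpP⟩ := hK.mem_toFinset.mp hP
  simp only [Function.comp_apply, absNorm_eq_pow_inertiaDeg'_of_mem hp hPmax hpP, Nat.cast_pow,
    Real.rpow_pow_comm (Nat.cast_nonneg p)]

lemma decompositionType_pos (hp : p.Prime)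
    (hK : {P : Ideal (𝓞 K) | P.IsMaximal ∧ (p : 𝓞 K) ∈ P}.Finite) :
    ∀ f ∈ hK.toFinset.val.map (fun P => Ideal.inertiaDeg' (Ideal.span {(p : ℤ)}) P), 0 < f := by
  simp only [Multiset.mem_map, Finset.mem_val, Set.Finite.mem_toFinset]
  rintro _ ⟨P, ⟨hPmax, hpP⟩, rfl⟩
  exact inertiaDeg'_pos_of_mem hp hPmax hpP

end NumberField

theorem eulerFactor_eq_iff_decompositionType_eq_general
    (K L : Type*) [Field K] [NumberField K] [Field L] [NumberField L]
    (p : ℕ) (hp : p.Prime)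
    (hK : {P : Ideal (𝓞 K) | P.IsMaximal ∧ (p : 𝓞 K) ∈ P}.Finite)
    (hL : {Q : Ideal (𝓞 L) | Q.IsMaximal ∧ (p : 𝓞 L) ∈ Q}.Finite) :
    (∀ s : ℝ, 1 < s →
        ∏ P ∈ hK.toFinset, (1 - (Ideal.absNorm P : ℝ) ^ (-s))⁻¹
          = ∏ Q ∈ hL.toFinset, (1 - (Ideal.absNorm Q : ℝ) ^ (-s))⁻¹)
      ↔ hK.toFinset.val.map
            (fun P => Ideal.inertiaDeg' (Ideal.span {(p : ℤ)}) P)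
          = hL.toFinset.val.map
            (fun Q => Ideal.inertiaDeg' (Ideal.span {(p : ℤ)}) Q) := by
  simp only [prod_eulerFactor_eq_inv_eval_eulerPolynomial hp, inv_inj]
  refine ⟨fun h => eulerPolynomial_injOn (R := ℝ) (decompositionType_pos hp hK)
    (decompositionType_pos hp hL) (eq_of_infinite_eval_eq _ _ ?_), fun h _ _ => by rw [h]⟩
  have hanti : StrictAnti fun s : ℝ => (p : ℝ) ^ (-s) := fun a b hab =>
    Real.rpow_lt_rpow_of_exponent_lt (by exact_mod_cast hp.one_lt) (neg_lt_neg hab)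
  refine ((Set.Ioi_infinite 1).image hanti.injective.injOn).mono ?_
  rintro _ ⟨s, hs, rfl⟩
  exact h s hs

/-- For number fields `K`, `L` of the same degree and a rational prime `p`, the Euler
factors at `p` of their Dedekind zeta functions agree for all real `s > 1` iff `p` has the
same decomposition type (multiset of residue degrees of primes above `p`) in `K` and `L`. -/
theorem eulerFactor_eq_iff_decompositionType_eq
    (K L : Type*) [Field K] [NumberField K] [Field L] [NumberField L]
    (hdeg : Module.finrank ℚ K = Module.finrank ℚ L)
    (p : ℕ) (hp : p.Prime)
    (hK : {P : Ideal (𝓞 K) | P.IsMaximal ∧ (p : 𝓞 K) ∈ P}.Finite)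
    (hL : {Q : Ideal (𝓞 L) | Q.IsMaximal ∧ (p : 𝓞 L) ∈ Q}.Finite) :
    (∀ s : ℝ, 1 < s →
        ∏ P ∈ hK.toFinset, (1 - (Ideal.absNorm P : ℝ) ^ (-s))⁻¹
          = ∏ Q ∈ hL.toFinset, (1 - (Ideal.absNorm Q : ℝ) ^ (-s))⁻¹)
      ↔ hK.toFinset.val.map
            (fun P => Ideal.inertiaDeg' (Ideal.span {(p : ℤ)}) P)
          = hL.toFinset.val.map
            (fun Q => Ideal.inertiaDeg' (Ideal.span {(p : ℤ)}) Q) :=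
  eulerFactor_eq_iff_decompositionType_eq_general K L p hp hK hL
end
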